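/- arXiv:1804.05437 — 3 statements merged into one kernel-verified Lean document; each statement's English description precedes it below -/
import Mathlib

section
/- Let q ≠ 0 and r be real numbers. For every nonnegative integer n, B_n^q(r) = ∑_{k=0}^n ∑_{j=0}^k (−1)^k k! W(n,k) W(k,j) c_j^q(r). -/
/-- The falling factorial `(x)_k = x(x-1)⋯(x-k+1)`. -/
noncomputable def fallFac (x : ℝ) (k : ℕ) : ℝ := ∏ i ∈ Finset.range k, (x - i)

/-- The generalized falling factorial `(x|q)_k = x(x-q)⋯(x-(k-1)q)`. -/
noncomputable def genFallFac (q x : ℝ) (k : ℕ) : ℝ := ∏ i ∈ Finset.range k, (x - i * q)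

/-- The Cauchy polynomials with a `q` parameter of the first kind:
`c_n^q(z) = ∫_0^1 (x − z | q)_n dx`. -/
noncomputable def cauchyFirst (q z : ℝ) (n : ℕ) : ℝ := ∫ x in (0:ℝ)..1, genFallFac q (x - z) n

/-!
Substituting `x ↦ (x - r) / q` in the defining identity of `W` turns `(x)_j` into
`q⁻ʲ (x - r | q)_j`, so `∑_j W(k,j) (x - r | q)_j = xᵏ`. Integrating over `[0,1]` gives
`∑_j W(k,j) c_j^q(r) = 1/(k+1)`, and substituting this into the inner sum of the right-hand side
recovers the defining formula of `B_n^q(r)`.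
-/

open Finset

lemma genFallFac_eq_pow_mul_fallFac {q : ℝ} (hq : q ≠ 0) (y : ℝ) (j : ℕ) :
    genFallFac q y j = q ^ j * fallFac (y / q) j := by
  have factor (i : ℕ) : y - i * q = q * (y / q - i) := by field_simp
  simp only [genFallFac, fallFac, factor, prod_mul_distrib, prod_const, card_range]

lemma continuous_genFallFac (q : ℝ) (j : ℕ) : Continuous fun x => genFallFac q x j :=
  continuous_finsetProd _ fun _ _ => continuous_id.sub continuous_const

lemma sum_mul_genFallFac_sub_eq_pow {q : ℝ} (hq : q ≠ 0) (r : ℝ) {k : ℕ} (w : ℕ → ℝ)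
    (hw : ∀ x : ℝ, (q * x + r) ^ k = ∑ j ∈ range (k + 1), q ^ j * w j * fallFac x j) (x : ℝ) :
    ∑ j ∈ range (k + 1), w j * genFallFac q (x - r) j = x ^ k := by
  have hx : q * ((x - r) / q) + r = x := by field_simp; ring
  calc ∑ j ∈ range (k + 1), w j * genFallFac q (x - r) j
      = ∑ j ∈ range (k + 1), q ^ j * w j * fallFac ((x - r) / q) j := by
        refine sum_congr rfl fun j _ => ?_
        rw [genFallFac_eq_pow_mul_fallFac hq]
        ring
    _ = x ^ k := by rw [← hw, hx]

lemma sum_mul_cauchyFirst_eq_inv_succ {q : ℝ} (hq : q ≠ 0) (r : ℝ) {k : ℕ} (w : ℕ → ℝ)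
    (hw : ∀ x : ℝ, (q * x + r) ^ k = ∑ j ∈ range (k + 1), q ^ j * w j * fallFac x j) :
    ∑ j ∈ range (k + 1), w j * cauchyFirst q r j = 1 / ((k : ℝ) + 1) := by
  have hint (j : ℕ) : IntervalIntegrable (fun x => w j * genFallFac q (x - r) j)
      MeasureTheory.volume 0 1 :=
    (continuous_const.mul ((continuous_genFallFac q j).comp
      (continuous_id.sub continuous_const))).intervalIntegrable 0 1
  calc ∑ j ∈ range (k + 1), w j * cauchyFirst q r j
      = ∫ x in (0:ℝ)..1, ∑ j ∈ range (k + 1), w j * genFallFac q (x - r) j := by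
        rw [intervalIntegral.integral_finsetSum fun j _ => hint j]
        simp only [cauchyFirst, intervalIntegral.integral_const_mul]
    _ = ∫ x in (0:ℝ)..1, x ^ k := by
        simp only [sum_mul_genFallFac_sub_eq_pow hq r w hw]
    _ = 1 / ((k : ℝ) + 1) := by
        simp [integral_pow]

theorem bernoulli_q_eq_double_sum_cauchyFirst_general (q r : ℝ) (hq : q ≠ 0)
    (W : ℕ → ℕ → ℝ)
    (hW : ∀ n : ℕ, ∀ x : ℝ, (q * x + r) ^ n =
      ∑ k ∈ Finset.range (n + 1), q ^ k * W n k * fallFac x k)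
    (B : ℕ → ℝ)
    (hB : ∀ n, B n = ∑ k ∈ Finset.range (n + 1),
      (-1 : ℝ) ^ k * ((k.factorial : ℝ) / ((k : ℝ) + 1)) * W n k)
    (n : ℕ) :
    B n = ∑ k ∈ Finset.range (n + 1), ∑ j ∈ Finset.range (k + 1),
      (-1 : ℝ) ^ k * (k.factorial : ℝ) * W n k * W k j * cauchyFirst q r j := by
  rw [hB n]
  refine sum_congr rfl fun k _ => ?_
  have inner : ∑ j ∈ range (k + 1), W k j * cauchyFirst q r j = 1 / ((k : ℝ) + 1) :=
    sum_mul_cauchyFirst_eq_inv_succ hq r (W k) (hW k)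
  simp_rw [mul_assoc _ (W k _), ← mul_sum, inner]
  ring

/-- `B_n^q(r) = ∑_{k=0}^n ∑_{j=0}^k (−1)^k k! W(n,k) W(k,j) c_j^q(r)`. -/
theorem bernoulli_q_eq_double_sum_cauchyFirst (q r : ℝ) (hq : q ≠ 0)
    (W : ℕ → ℕ → ℝ)
    (hW0 : ∀ n k, n < k → W n k = 0)
    (hW : ∀ n : ℕ, ∀ x : ℝ, (q * x + r) ^ n =
      ∑ k ∈ Finset.range (n + 1), q ^ k * W n k * fallFac x k)
    (B : ℕ → ℝ)
    (hB : ∀ n, B n = ∑ k ∈ Finset.range (n + 1),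
      (-1 : ℝ) ^ k * ((k.factorial : ℝ) / ((k : ℝ) + 1)) * W n k)
    (n : ℕ) :
    B n = ∑ k ∈ Finset.range (n + 1), ∑ j ∈ Finset.range (k + 1),
      (-1 : ℝ) ^ k * (k.factorial : ℝ) * W n k * W k j * cauchyFirst q r j :=
  bernoulli_q_eq_double_sum_cauchyFirst_general q r hq W hW B hB n
end

section
/- Let r be a real number and take q = 1. For every nonnegative integer n, B_n^1(r) equals the classical Bernoulli polynomial B_n evaluated at r (the polynomial satisfying the generating function ∑_{n=0}^∞ B_n(r) t^n/n! = t e^{rt}/(e^t − 1), as in Mathlib's Polynomial.bernoulli). -/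
/-!
Put `L(c) = ∑ₖ (-1)ᵏ k!/(k+1) cₖ` for a coefficient sequence `c` in the falling-factorial basis,
so that `B_n^1(r) = L(W n)`, where `W n` expands `(x + r)ⁿ`. The shift `x ↦ x + 1` acts on
coefficients by `cₖ ↦ cₖ + (k+1) cₖ₊₁`, and `L` of the increment, `∑ₖ (-1)ᵏ k! cₖ₊₁`, is the
derivative at `0` of the expanded function, because `(x)ₖ₊₁ = x (x-1)ₖ` has derivative
`(-1)ₖ = (-1)ᵏ k!` there. Applied to `(x + 1 + r)^(N+1) = ∑ₘ C(N+1, m) (x + r)ᵐ` this yields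
`∑_{m ≤ N} C(N+1, m) B_m^1(r) = (N+1) rᴺ`, the recurrence that determines the classical
Bernoulli polynomials.
-/

open Finset Polynomial Nat

lemma fallFac_eq_eval_descPochhammer (x : ℝ) (k : ℕ) :
    fallFac x k = (descPochhammer ℝ k).eval x :=
  (descPochhammer_eval_eq_prod_range k x).symm

lemma fallFac_zero (x : ℝ) : fallFac x 0 = 1 :=
  prod_range_zero _

lemma fallFac_succ_right (x : ℝ) (k : ℕ) : fallFac x (k + 1) = fallFac x k * (x - k) :=
  prod_range_succ _ k

lemma fallFac_succ_left (x : ℝ) (k : ℕ) : fallFac x (k + 1) = x * fallFac (x - 1) k := by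
  simp [fallFac_eq_eval_descPochhammer, descPochhammer_succ_left]

lemma fallFac_add_one (x : ℝ) (k : ℕ) :
    fallFac (x + 1) (k + 1) = fallFac x (k + 1) + (k + 1) * fallFac x k := by
  rw [fallFac_succ_left (x + 1), add_sub_cancel_right, fallFac_succ_right]
  ring

lemma fallFac_natCast_self (k : ℕ) : fallFac k k = k ! := by
  rw [fallFac_eq_eval_descPochhammer, descPochhammer_eval_eq_descFactorial, descFactorial_self]

lemma fallFac_natCast_of_lt {m k : ℕ} (h : m < k) : fallFac m k = 0 := by
  rw [fallFac_eq_eval_descPochhammer, descPochhammer_eval_coe_nat_of_lt h]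

lemma fallFac_neg_one (k : ℕ) : fallFac (-1) k = (-1) ^ k * k ! := by
  induction k with
  | zero => simp [fallFac_zero]
  | succ k ih => rw [fallFac_succ_right, ih, factorial_succ]; push_cast; ring

lemma hasDerivAt_fallFac_succ_zero (k : ℕ) :
    HasDerivAt (fun x => fallFac x (k + 1)) ((-1) ^ k * k !) 0 := by
  simp only [fallFac_eq_eval_descPochhammer]
  refine ((descPochhammer ℝ (k + 1)).hasDerivAt 0).congr_deriv ?_
  rw [descPochhammer_succ_left, derivative_mul]
  simp [← fallFac_eq_eval_descPochhammer, fallFac_neg_one]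

lemma eq_of_sum_mul_fallFac_eq {N : ℕ} {a b : ℕ → ℝ}
    (h : ∀ x, ∑ k ∈ range N, a k * fallFac x k = ∑ k ∈ range N, b k * fallFac x k) :
    ∀ k < N, a k = b k := by
  have hd (x : ℝ) : ∑ k ∈ range N, (a k - b k) * fallFac x k = 0 := by
    simp only [sub_mul, sum_sub_distrib, h, sub_self]
  intro k
  induction k using Nat.strong_induction_on with
  | _ k ih =>
    intro hk
    have hk' := hd k
    rw [sum_eq_single k (fun m _ hmk => ?_) (fun h => absurd (mem_range.2 hk) h),
      fallFac_natCast_self] at hk'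
    · exact sub_eq_zero.1 ((mul_eq_zero.1 hk').resolve_right (by positivity))
    · rcases hmk.lt_or_gt with hlt | hgt
      · rw [sub_eq_zero.2 (ih m hlt (hlt.trans hk)), zero_mul]
      · rw [fallFac_natCast_of_lt hgt, mul_zero]

lemma sum_mul_fallFac_add_one (c : ℕ → ℝ) {N : ℕ} (hc : c (N + 1) = 0) (x : ℝ) :
    ∑ k ∈ range (N + 1), c k * fallFac (x + 1) k =
      ∑ k ∈ range (N + 1), (c k + (k + 1) * c (k + 1)) * fallFac x k := by
  simp only [add_mul _ _ (fallFac x _), sum_add_distrib]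
  rw [sum_range_succ', sum_range_succ' (fun k => c k * fallFac x k),
    sum_range_succ (fun k => (k + 1) * c (k + 1) * fallFac x k), hc]
  simp only [fallFac_add_one, fallFac_zero, mul_add, sum_add_distrib,
    mul_left_comm (c _) ((_ : ℝ) + 1), mul_assoc]
  ring

lemma hasDerivAt_sum_mul_fallFac_zero (c : ℕ → ℝ) (N : ℕ) :
    HasDerivAt (fun x => ∑ k ∈ range (N + 1), c k * fallFac x k)
      (∑ k ∈ range N, c (k + 1) * ((-1) ^ k * k !)) 0 := by
  simp only [sum_range_succ' _ N, fallFac_zero]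
  exact (HasDerivAt.fun_sum fun k _ =>
    (hasDerivAt_fallFac_succ_zero k).const_mul (c (k + 1))).add_const _

lemma eq_of_sum_choose_mul_eq {u v : ℕ → ℝ}
    (h : ∀ N, ∑ m ∈ range (N + 1), ((N + 1).choose m : ℝ) * u m =
      ∑ m ∈ range (N + 1), ((N + 1).choose m : ℝ) * v m) (n : ℕ) : u n = v n := by
  induction n using Nat.strong_induction_on with
  | _ n ih =>
    have hn := h n
    rw [sum_range_succ, sum_range_succ, sum_congr rfl fun m hm => by rw [ih m (mem_range.1 hm)],
      add_right_inj, choose_succ_self_right] at hn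
    exact mul_left_cancel₀ (by positivity) hn

lemma sum_choose_mul_aeval_bernoulli (r : ℝ) (N : ℕ) :
    ∑ m ∈ range (N + 1), ((N + 1).choose m : ℝ) * aeval r (bernoulli m) = (N + 1) * r ^ N := by
  have h := congrArg (aeval r) (sum_bernoulli N)
  simp only [map_sum, map_smul, aeval_monomial] at h
  simpa [Rat.smul_def] using h

section WhitneyExpansion

variable {r : ℝ} {W : ℕ → ℕ → ℝ}

lemma pow_eq_sum_mul_fallFac_of_lt (hW0 : ∀ n k, n < k → W n k = 0)
    (hW : ∀ n (x : ℝ), (x + r) ^ n = ∑ k ∈ range (n + 1), W n k * fallFac x k)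
    {n M : ℕ} (hnM : n < M) (x : ℝ) :
    (x + r) ^ n = ∑ k ∈ range M, W n k * fallFac x k := by
  rw [hW]
  refine sum_subset (range_subset_range.2 hnM) fun k _ hk => ?_
  rw [hW0 n k (by simpa using hk), zero_mul]

lemma sum_choose_mul_whitney (hW0 : ∀ n k, n < k → W n k = 0)
    (hW : ∀ n (x : ℝ), (x + r) ^ n = ∑ k ∈ range (n + 1), W n k * fallFac x k) (N : ℕ) :
    ∀ k < N + 2, ∑ m ∈ range (N + 2), ((N + 1).choose m : ℝ) * W m k =
      W (N + 1) k + (k + 1) * W (N + 1) (k + 1) := by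
  refine eq_of_sum_mul_fallFac_eq fun x => ?_
  calc ∑ k ∈ range (N + 2), (∑ m ∈ range (N + 2), ((N + 1).choose m : ℝ) * W m k) * fallFac x k
      = ∑ m ∈ range (N + 2), ((N + 1).choose m : ℝ) * (x + r) ^ m := by
        simp only [sum_mul, mul_assoc]
        rw [sum_comm]
        refine sum_congr rfl fun m hm => ?_
        rw [← mul_sum, pow_eq_sum_mul_fallFac_of_lt hW0 hW (mem_range.1 hm)]
    _ = (x + 1 + r) ^ (N + 1) := by
        rw [add_right_comm, add_pow]
        simp only [one_pow, mul_one, mul_comm]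
    _ = ∑ k ∈ range (N + 2), W (N + 1) k * fallFac (x + 1) k := hW _ _
    _ = _ := sum_mul_fallFac_add_one _ (hW0 _ _ (by omega)) x

lemma sum_whitney_succ_mul_signed_factorial (hW0 : ∀ n k, n < k → W n k = 0)
    (hW : ∀ n (x : ℝ), (x + r) ^ n = ∑ k ∈ range (n + 1), W n k * fallFac x k) (N : ℕ) :
    ∑ k ∈ range (N + 2), W (N + 1) (k + 1) * ((-1) ^ k * k !) = (N + 1) * r ^ N := by
  have hpow : HasDerivAt (fun x : ℝ => (x + r) ^ (N + 1)) ((N + 1) * r ^ N) 0 := by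
    simpa using (hasDerivAt_pow (N + 1) (0 + r)).comp_add_const 0 r
  refine (hasDerivAt_sum_mul_fallFac_zero (W (N + 1)) (N + 2)).unique ?_
  simpa only [pow_eq_sum_mul_fallFac_of_lt hW0 hW (by omega : N + 1 < N + 3)] using hpow

lemma sum_choose_mul_eq_pow_of_whitney (hW0 : ∀ n k, n < k → W n k = 0)
    (hW : ∀ n (x : ℝ), (x + r) ^ n = ∑ k ∈ range (n + 1), W n k * fallFac x k) {B : ℕ → ℝ}
    (hB : ∀ n, B n = ∑ k ∈ range (n + 1), (-1 : ℝ) ^ k * ((k ! : ℝ) / ((k : ℝ) + 1)) * W n k)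
    (N : ℕ) :
    ∑ m ∈ range (N + 1), ((N + 1).choose m : ℝ) * B m = (N + 1) * r ^ N := by
  set w : ℕ → ℝ := fun k => (-1) ^ k * (k ! / (k + 1)) with hw
  have hB' : ∀ m < N + 2, B m = ∑ k ∈ range (N + 2), w k * W m k := fun m hm => by
    rw [hB]
    refine sum_subset (range_subset_range.2 hm) fun k _ hk => ?_
    rw [hW0 m k (by simpa using hk), mul_zero]
  have hw_mul (k : ℕ) : w k * (k + 1) = (-1) ^ k * k ! := by
    rw [hw]
    field_simp
  have hsum : ∑ m ∈ range (N + 2), ((N + 1).choose m : ℝ) * B m = B (N + 1) + (N + 1) * r ^ N :=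
    calc ∑ m ∈ range (N + 2), ((N + 1).choose m : ℝ) * B m
        = ∑ k ∈ range (N + 2), w k * ∑ m ∈ range (N + 2), ((N + 1).choose m : ℝ) * W m k := by
          rw [sum_congr rfl fun m hm => by rw [hB' m (mem_range.1 hm)]]
          simp only [mul_sum]
          rw [sum_comm]
          exact sum_congr rfl fun k _ => sum_congr rfl fun m _ => by ring
      _ = ∑ k ∈ range (N + 2), (w k * W (N + 1) k + W (N + 1) (k + 1) * ((-1) ^ k * k !)) :=
          sum_congr rfl fun k hk => by
            rw [sum_choose_mul_whitney hW0 hW N k (mem_range.1 hk), ← hw_mul]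
            ring
      _ = B (N + 1) + (N + 1) * r ^ N := by
          rw [sum_add_distrib, ← hB' _ (by omega), sum_whitney_succ_mul_signed_factorial hW0 hW]
  rw [sum_range_succ, choose_self, cast_one, one_mul] at hsum
  linarith

end WhitneyExpansion

/-- for `q = 1`, the Bernoulli polynomials with a `q` parameter reduce to
the classical Bernoulli polynomials: `B_n^1(r) = B_n(r)` (Mathlib's
`Polynomial.bernoulli`, evaluated at `r`). -/
theorem bernoulli_q_one_eq_bernoulli (r : ℝ)
    (W : ℕ → ℕ → ℝ)
    (hW0 : ∀ n k, n < k → W n k = 0)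
    (hW : ∀ n : ℕ, ∀ x : ℝ, ((1 : ℝ) * x + r) ^ n =
      ∑ k ∈ Finset.range (n + 1), (1 : ℝ) ^ k * W n k * fallFac x k)
    (B : ℕ → ℝ)
    (hB : ∀ n, B n = ∑ k ∈ Finset.range (n + 1),
      (-1 : ℝ) ^ k * ((k.factorial : ℝ) / ((k : ℝ) + 1)) * W n k)
    (n : ℕ) :
    B n = Polynomial.aeval r (Polynomial.bernoulli n) := by
  have hW' : ∀ n (x : ℝ), (x + r) ^ n = ∑ k ∈ range (n + 1), W n k * fallFac x k := by
    simpa using hW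
  refine eq_of_sum_choose_mul_eq (u := B) (v := fun m => aeval r (bernoulli m)) (fun N => ?_) n
  rw [sum_choose_mul_eq_pow_of_whitney hW0 hW' hB, sum_choose_mul_aeval_bernoulli]
end

section
/- Let q ≠ 0 and let r and s be real numbers. For all nonnegative integers n and k with k ≤ n, W_{q,r+s}(n,k) = ∑_{j=k}^n C(n,j) r^{n−j} W_{q,s}(j,k), where C(n,j) denotes the binomial coefficient. -/
lemma fallFac_nat_zero {m i : ℕ} (h : m < i) : fallFac (m : ℝ) i = 0 := by
  apply Finset.prod_eq_zero (Finset.mem_range.mpr h)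
  simp

lemma fallFac_succ (x : ℝ) (k : ℕ) : fallFac x (k + 1) = fallFac (x - 1) k * x := by
  unfold fallFac
  rw [Finset.prod_range_succ']
  congr 1
  · refine Finset.prod_congr rfl fun i _ => ?_
    push_cast; ring
  · simp

lemma fallFac_self (k : ℕ) : fallFac (k : ℝ) k = k.factorial := by
  induction k with
  | zero => simp [fallFac]
  | succ m ih =>
    rw [fallFac_succ]
    push_cast
    rw [show ((m : ℝ) + 1) - 1 = (m : ℝ) by ring, ih]
    push_cast [Nat.factorial_succ]
    ring

lemma coeff_zero (n : ℕ) (f : ℕ → ℝ)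
    (h : ∀ x : ℝ, ∑ k ∈ Finset.range (n + 1), f k * fallFac x k = 0) :
    ∀ k, k ≤ n → f k = 0 := by
  intro k
  induction k using Nat.strong_induction_on with
  | _ k ih =>
    intro hk
    have h0 := h (k : ℝ)
    rw [Finset.sum_eq_single k] at h0
    · have hne : fallFac (k : ℝ) k ≠ 0 := by
        rw [fallFac_self]
        exact_mod_cast Nat.factorial_ne_zero k
      exact (mul_eq_zero.mp h0).resolve_right hne
    · intro i hi hik
      rcases lt_or_gt_of_ne hik with hlt | hgt
      · rw [ih i hlt (le_trans (le_of_lt hlt) hk), zero_mul]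
      · rw [fallFac_nat_zero hgt, mul_zero]
    · intro hknot
      exact absurd (Finset.mem_range.mpr (Nat.lt_succ_of_le hk)) hknot

/-- `W_{q,r+s}(n,k) = ∑_{j=k}^n C(n,j) r^{n−j} W_{q,s}(j,k)`, where
`W a` are the `a`-Whitney numbers of the second kind. -/
theorem whitneySecond_add_param (q r s : ℝ) (hq : q ≠ 0)
    (W : ℝ → ℕ → ℕ → ℝ)
    (hW0 : ∀ (a : ℝ) (n k : ℕ), n < k → W a n k = 0)
    (hW : ∀ (a : ℝ) (n : ℕ), ∀ x : ℝ, (q * x + a) ^ n =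
      ∑ k ∈ Finset.range (n + 1), q ^ k * W a n k * fallFac x k)
    (n k : ℕ) (hkn : k ≤ n) :
    W (r + s) n k = ∑ j ∈ Finset.Icc k n, (n.choose j : ℝ) * r ^ (n - j) * W s j k := by
  set g : ℕ → ℝ := fun k => ∑ j ∈ Finset.Icc k n, (n.choose j : ℝ) * r ^ (n - j) * W s j k
    with hg
  have key : ∀ x : ℝ, ∑ i ∈ Finset.range (n + 1),
      (q ^ i * (W (r + s) n i - g i)) * fallFac x i = 0 := by
    intro x
    have h1 : (q * x + (r + s)) ^ n =
        ∑ i ∈ Finset.range (n + 1), q ^ i * W (r + s) n i * fallFac x i := hW _ _ _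
    have h2 : (q * x + (r + s)) ^ n =
        ∑ i ∈ Finset.range (n + 1), q ^ i * g i * fallFac x i := by
      have expand : (q * x + (r + s)) ^ n =
          ∑ j ∈ Finset.range (n + 1), (q * x + s) ^ j * r ^ (n - j) * (n.choose j : ℝ) := by
        rw [show q * x + (r + s) = (q * x + s) + r by ring, add_pow]
      rw [expand]
      have step : ∀ j ∈ Finset.range (n + 1),
          (q * x + s) ^ j * r ^ (n - j) * (n.choose j : ℝ) =
          ∑ i ∈ Finset.range (n + 1),
            q ^ i * ((n.choose j : ℝ) * r ^ (n - j) * W s j i) * fallFac x i := by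
        intro j hj
        rw [hW s j x]
        have hjn : j + 1 ≤ n + 1 := Finset.mem_range.mp hj
        rw [← Finset.sum_subset (Finset.range_subset_range.mpr hjn)
          (fun i _ hi => by
            rw [hW0 s j i (by
              rcases Nat.lt_or_ge j i with h | h
              · exact h
              · exact absurd (Finset.mem_range.mpr (Nat.lt_succ_of_le h)) hi)]
            ring)]
        rw [Finset.sum_mul, Finset.sum_mul]
        refine Finset.sum_congr rfl fun i _ => by ring
      rw [Finset.sum_congr rfl step, Finset.sum_comm]
      refine Finset.sum_congr rfl fun i hi => ?_
      rw [hg]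
      have hsub : Finset.Icc i n ⊆ Finset.range (n + 1) := by
        intro j hj
        exact Finset.mem_range.mpr (Nat.lt_succ_of_le (Finset.mem_Icc.mp hj).2)
      rw [← Finset.sum_subset hsub (fun j hj hji => by
        rw [hW0 s j i (by
          rcases Nat.lt_or_ge j i with h | h
          · exact h
          · exact absurd (Finset.mem_Icc.mpr ⟨h, Nat.lt_succ_iff.mp (Finset.mem_range.mp hj)⟩) hji)]
        ring)]
      rw [Finset.mul_sum, Finset.sum_mul]
    calc ∑ i ∈ Finset.range (n + 1), (q ^ i * (W (r + s) n i - g i)) * fallFac x i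
        = (∑ i ∈ Finset.range (n + 1), q ^ i * W (r + s) n i * fallFac x i)
          - ∑ i ∈ Finset.range (n + 1), q ^ i * g i * fallFac x i := by
          rw [← Finset.sum_sub_distrib]
          exact Finset.sum_congr rfl fun i _ => by ring
      _ = 0 := by rw [← h1, ← h2, sub_self]
  have := coeff_zero n _ key k hkn
  have hqk : q ^ k ≠ 0 := pow_ne_zero _ hq
  have := (mul_eq_zero.mp this).resolve_left hqk
  linarith [sub_eq_zero.mp this]
end
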